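/- Let d₀, d₁, ν₀, ν₁, e₀, e₁ be functions rational at infinity, with d₀ not identically 0 and d₀ not identically 1. Then there exist functions E₀, E₁, E₂, each rational at infinity and depending only on d₀, d₁, ν₀, ν₁, e₀, e₁, with E₂ not identically zero, such that the following holds: for every domain U contained in an annulus Ω(r) on which d₀, d₁, ν₀, ν₁, e₀, e₁, E₀, E₁, E₂ are all analytic and d₀ and d₀ − 1 have no zeros, and every pair of zero-free analytic functions p, q on U satisfying p′/p = d₀·(q′/q) + d₁ and q″ + ν₁q′ + ν₀q = 0 on U, one has E₂·(p″/p) + E₁·(p′/p) + E₀ = (p′/p)² + e₁·(p′/p) + e₀ on U. -/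

import Mathlib

/-- A function is rational at infinity if it is analytic on some annulus
`Ω(r) = {z : r < |z|}` and has at most polynomial growth there
(equivalently, at most a pole at `∞`). -/
def RationalAtInfinity (a : ℂ → ℂ) : Prop :=
  ∃ r : ℝ, 0 < r ∧ AnalyticOnNhd ℂ a {z : ℂ | r < ‖z‖} ∧
    ∃ (n : ℕ) (C : ℝ), ∀ z : ℂ, r < ‖z‖ →
      ‖a z‖ ≤ C * ‖z‖ ^ n

/-!
Write `L = p'/p` and `M = q'/q`. Differentiating `L = d₀ M + d₁` and inserting the Riccati
equation `M' = -M² - ν₁ M - ν₀` into `p''/p = L' + L²`, then eliminating `d₀ M = L - d₁`, gives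
`d₀ p''/p = (d₀ - 1) L² + A L + B` with `A`, `B` built from `d₀, d₁, ν₀, ν₁` and `d₀', d₁'`.
Dividing by `d₀ - 1` yields `E₂ = d₀/(d₀ - 1)`, `E₁ = e₁ - A/(d₀ - 1)`, `E₀ = e₀ - B/(d₀ - 1)`.
Functions rational at infinity form a ring closed under differentiation (Cauchy estimates on
discs of radius `|z|/2`) and under inversion of functions that do not vanish identically near `∞`
(`w ↦ wⁿ a(1/w)` has a removable singularity at `0`), so the `Eᵢ` are rational at infinity.
-/

open Filter Bornology Asymptotics Topology Metric

section Cobounded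

variable {E : Type*} [SeminormedAddCommGroup E]

lemma eventually_cobounded_iff_norm_lt {P : E → Prop} :
    (∀ᶠ z in cobounded E, P z) ↔ ∃ r : ℝ, ∀ z : E, r < ‖z‖ → P z := by
  rw [← comap_norm_atTop, (atTop_basis_Ioi.comap norm).eventually_iff]
  simp

lemma frequently_cobounded_iff_norm_lt {P : E → Prop} :
    (∃ᶠ z in cobounded E, P z) ↔ ∀ r : ℝ, ∃ z : E, r < ‖z‖ ∧ P z := by
  rw [← comap_norm_atTop, (atTop_basis_Ioi.comap norm).frequently_iff]
  simp

end Cobounded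

lemma isBigO_pow_pow_cobounded {𝕜 : Type*} [NormedDivisionRing 𝕜] {m n : ℕ} (h : m ≤ n) :
    (fun z : 𝕜 => z ^ m) =O[cobounded 𝕜] (· ^ n) :=
  .of_bound 1 <| (eventually_cobounded_le_norm 1).mono fun z hz => by
    simpa [norm_pow] using pow_le_pow_right₀ hz h

lemma norm_deriv_le_of_forall_norm_le {F : Type*} [NormedAddCommGroup F] [NormedSpace ℂ F]
    {f : ℂ → F} {R C : ℝ} {n : ℕ} (hR : 0 ≤ R) (hC : 0 ≤ C)
    (h : ∀ w : ℂ, R < ‖w‖ → DifferentiableAt ℂ f w ∧ ‖f w‖ ≤ C * ‖w‖ ^ n)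
    {z : ℂ} (hz : 2 * R < ‖z‖) : ‖deriv f z‖ ≤ (3 / 2) ^ n * C * ‖z‖ ^ n / (‖z‖ / 2) := by
  have hball : closedBall z (‖z‖ / 2) ⊆ {w : ℂ | R < ‖w‖} := fun w hw => by
    have := norm_sub_norm_le z w
    rw [mem_closedBall, dist_eq_norm, norm_sub_rev] at hw
    show R < ‖w‖
    linarith
  refine Complex.norm_deriv_le_of_forall_mem_sphere_norm_le (by linarith)
    (DifferentiableOn.diffContOnCl_ball (fun w hw => (h w hw).1.differentiableWithinAt) hball)
    fun w hw => ?_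
  have hw' : ‖w‖ ≤ 3 / 2 * ‖z‖ := by
    have := norm_le_norm_add_norm_sub' w z
    rw [mem_sphere, dist_eq_norm] at hw
    linarith
  calc ‖f w‖ ≤ C * ‖w‖ ^ n := (h w (hball (sphere_subset_closedBall hw))).2
    _ ≤ C * (3 / 2 * ‖z‖) ^ n := by gcongr
    _ = (3 / 2) ^ n * C * ‖z‖ ^ n := by ring

theorem rationalAtInfinity_iff {a : ℂ → ℂ} :
    RationalAtInfinity a ↔
      (∀ᶠ z in cobounded ℂ, AnalyticAt ℂ a z) ∧ ∃ n : ℕ, a =O[cobounded ℂ] (· ^ n) := by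
  constructor
  · rintro ⟨r, -, han, n, C, hC⟩
    have hr : ∀ᶠ z in cobounded ℂ, r < ‖z‖ := eventually_cobounded_iff_norm_lt.2 ⟨r, fun _ => id⟩
    exact ⟨hr.mono han, n, .of_bound C (hr.mono fun z hz => by simpa using hC z hz)⟩
  · rintro ⟨han, n, hO⟩
    obtain ⟨C, hC⟩ := hO.bound
    obtain ⟨r, hr⟩ := eventually_cobounded_iff_norm_lt.1 (han.and hC)
    have hr' : ∀ z : ℂ, max r 1 < ‖z‖ → AnalyticAt ℂ a z ∧ ‖a z‖ ≤ C * ‖z ^ n‖ :=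
      fun z hz => hr z (lt_of_le_of_lt (le_max_left _ _) hz)
    exact ⟨max r 1, by positivity, fun z hz => (hr' z hz).1, n, C,
      fun z hz => by simpa using (hr' z hz).2⟩

namespace RationalAtInfinity

variable {a b : ℂ → ℂ}

lemma const (c : ℂ) : RationalAtInfinity fun _ => c :=
  rationalAtInfinity_iff.2 ⟨.of_forall fun _ => analyticAt_const, 0,
    by simpa using isBigO_const_const c (one_ne_zero (α := ℂ)) (cobounded ℂ)⟩

lemma add (ha : RationalAtInfinity a) (hb : RationalAtInfinity b) :
    RationalAtInfinity fun z => a z + b z := by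
  obtain ⟨ha, m, hOa⟩ := rationalAtInfinity_iff.1 ha
  obtain ⟨hb, n, hOb⟩ := rationalAtInfinity_iff.1 hb
  exact rationalAtInfinity_iff.2 ⟨(ha.and hb).mono fun z h => h.1.add h.2, max m n,
    (hOa.trans (isBigO_pow_pow_cobounded (le_max_left m n))).add
      (hOb.trans (isBigO_pow_pow_cobounded (le_max_right m n)))⟩

lemma sub (ha : RationalAtInfinity a) (hb : RationalAtInfinity b) :
    RationalAtInfinity fun z => a z - b z := by
  obtain ⟨ha, m, hOa⟩ := rationalAtInfinity_iff.1 ha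
  obtain ⟨hb, n, hOb⟩ := rationalAtInfinity_iff.1 hb
  exact rationalAtInfinity_iff.2 ⟨(ha.and hb).mono fun z h => h.1.sub h.2, max m n,
    (hOa.trans (isBigO_pow_pow_cobounded (le_max_left m n))).sub
      (hOb.trans (isBigO_pow_pow_cobounded (le_max_right m n)))⟩

lemma mul (ha : RationalAtInfinity a) (hb : RationalAtInfinity b) :
    RationalAtInfinity fun z => a z * b z := by
  obtain ⟨ha, m, hOa⟩ := rationalAtInfinity_iff.1 ha
  obtain ⟨hb, n, hOb⟩ := rationalAtInfinity_iff.1 hb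
  exact rationalAtInfinity_iff.2 ⟨(ha.and hb).mono fun z h => h.1.mul h.2, m + n,
    by simpa only [pow_add] using hOa.mul hOb⟩

lemma pow (ha : RationalAtInfinity a) (n : ℕ) : RationalAtInfinity fun z => a z ^ n := by
  induction n with
  | zero => simpa using const 1
  | succ n ih => simpa only [pow_succ] using ih.mul ha

lemma deriv (ha : RationalAtInfinity a) : RationalAtInfinity (_root_.deriv a) := by
  obtain ⟨han, n, hO⟩ := rationalAtInfinity_iff.1 ha
  obtain ⟨C, hC0, hC⟩ := hO.exists_nonneg
  obtain ⟨R, hR⟩ := eventually_cobounded_iff_norm_lt.1 (han.and hC.bound)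
  have hbound : ∀ w : ℂ, max R 0 < ‖w‖ → DifferentiableAt ℂ a w ∧ ‖a w‖ ≤ C * ‖w‖ ^ n :=
    fun w hw => by
      obtain ⟨hw₁, hw₂⟩ := hR w (lt_of_le_of_lt (le_max_left _ _) hw)
      exact ⟨hw₁.differentiableAt, by simpa using hw₂⟩
  refine rationalAtInfinity_iff.2
    ⟨han.mono fun z h => h.deriv, n, .of_bound (2 * (3 / 2) ^ n * C) ?_⟩
  filter_upwards [eventually_cobounded_iff_norm_lt.2 ⟨max (2 * max R 0) 1, fun _ => id⟩]
    with z hz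
  have hz₁ : 1 ≤ ‖z‖ := le_of_lt (lt_of_le_of_lt (le_max_right _ _) hz)
  calc ‖_root_.deriv a z‖ ≤ (3 / 2) ^ n * C * ‖z‖ ^ n / (‖z‖ / 2) :=
        norm_deriv_le_of_forall_norm_le (le_max_right _ _) hC0 hbound
          (lt_of_le_of_lt (le_max_left _ _) hz)
    _ = 2 * (3 / 2) ^ n * C * ‖z ^ n‖ / ‖z‖ := by rw [norm_pow]; ring
    _ ≤ 2 * (3 / 2) ^ n * C * ‖z ^ n‖ := div_le_self (by positivity) hz₁

lemma exists_analyticAt_zero_eq_pow_mul_comp_inv (ha : RationalAtInfinity a) :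
    ∃ (n : ℕ) (g : ℂ → ℂ), AnalyticAt ℂ g 0 ∧ ∀ᶠ z in cobounded ℂ, a z = z ^ n * g z⁻¹ := by
  obtain ⟨r, hr, han, n, C, hC⟩ := ha
  set f : ℂ → ℂ := fun w => w ^ n * a w⁻¹
  have hmem : ∀ w ∈ ball (0 : ℂ) r⁻¹ \ {0}, r < ‖w⁻¹‖ := fun w hw => by
    rw [norm_inv]
    exact (lt_inv_comm₀ (norm_pos_iff.2 hw.2) hr).1 (mem_ball_zero_iff.1 hw.1)
  have hd : DifferentiableOn ℂ f (ball 0 r⁻¹ \ {0}) := fun w hw =>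
    ((differentiableAt_id.pow n).mul ((han _ (hmem w hw)).differentiableAt.comp w
      (differentiableAt_inv hw.2))).differentiableWithinAt
  have hb : BddAbove (norm ∘ f '' (ball 0 r⁻¹ \ {0})) := by
    refine ⟨C, ?_⟩
    rintro _ ⟨w, hw, rfl⟩
    have hw0 : ‖w‖ ≠ 0 := norm_ne_zero_iff.2 hw.2
    calc ‖f w‖ = ‖w‖ ^ n * ‖a w⁻¹‖ := by simp [f]
      _ ≤ ‖w‖ ^ n * (C * ‖w⁻¹‖ ^ n) := by gcongr; exact hC _ (hmem w hw)
      _ = C := by rw [norm_inv, inv_pow]; field_simp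
  have hnhds : ball (0 : ℂ) r⁻¹ ∈ 𝓝 0 := ball_mem_nhds 0 (inv_pos.2 hr)
  refine ⟨n, _, (Complex.differentiableOn_update_limUnder_of_bddAbove hnhds hd hb).analyticAt
    hnhds, ?_⟩
  filter_upwards [eventually_cobounded_iff_norm_lt.2 ⟨r, fun _ => id⟩] with z hz
  have hz0 : z ≠ 0 := norm_pos_iff.1 (hr.trans hz)
  rw [Function.update_of_ne (inv_ne_zero hz0)]
  simp [f, hz0]

lemma exists_eventually_inv_eq (ha : RationalAtInfinity a)
    (hfreq : ∃ᶠ z in cobounded ℂ, a z ≠ 0) :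
    ∃ (k : ℕ) (φ : ℂ → ℂ), ContinuousAt φ 0 ∧
      ∀ᶠ z in cobounded ℂ, a z ≠ 0 ∧ (a z)⁻¹ = z ^ k * φ z⁻¹ := by
  obtain ⟨n, g, hg, hag⟩ := ha.exists_analyticAt_zero_eq_pow_mul_comp_inv
  have hg_ne : ¬ ∀ᶠ w in 𝓝 0, g w = 0 := fun hzero => by
    obtain ⟨z, hz, hgz, haz⟩ :=
      (hfreq.and_eventually ((tendsto_inv₀_cobounded.eventually hzero).and hag)).exists
    exact hz (by rw [haz, hgz, mul_zero])
  obtain ⟨k, h, hh, hh0, hgh⟩ := hg.exists_eventuallyEq_pow_smul_nonzero_iff.2 hg_ne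
  refine ⟨k, fun w => w ^ n * (h w)⁻¹,
    (continuousAt_id.pow n).mul (hh.continuousAt.inv₀ hh0), ?_⟩
  filter_upwards [hag,
    tendsto_inv₀_cobounded.eventually (hgh.and (hh.continuousAt.eventually_ne hh0)),
    eventually_cobounded_iff_norm_lt.2 ⟨0, fun z hz => norm_pos_iff.1 hz⟩]
    with z haz ⟨hgz, hhz⟩ hz0
  rw [haz, hgz, sub_zero, smul_eq_mul]
  refine ⟨by simp [hz0, hhz], ?_⟩
  simp only [mul_inv, inv_pow, inv_inv]
  ring

lemma eventually_ne_zero (ha : RationalAtInfinity a) (hfreq : ∃ᶠ z in cobounded ℂ, a z ≠ 0) :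
    ∀ᶠ z in cobounded ℂ, a z ≠ 0 :=
  let ⟨_, _, _, h⟩ := ha.exists_eventually_inv_eq hfreq
  h.mono fun _ hz => hz.1

lemma inv (ha : RationalAtInfinity a) (hfreq : ∃ᶠ z in cobounded ℂ, a z ≠ 0) :
    RationalAtInfinity fun z => (a z)⁻¹ := by
  obtain ⟨k, φ, hφ, h⟩ := ha.exists_eventually_inv_eq hfreq
  refine rationalAtInfinity_iff.2
    ⟨((rationalAtInfinity_iff.1 ha).1.and h).mono fun z hz => hz.1.inv hz.2.1, k, ?_⟩
  have hφO : (fun z : ℂ => φ z⁻¹) =O[cobounded ℂ] (fun _ => (1 : ℂ)) :=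
    (hφ.tendsto.comp tendsto_inv₀_cobounded).isBigO_one ℂ
  simpa using ((isBigO_refl (fun z : ℂ => z ^ k) _).mul hφO).congr'
    (h.mono fun z hz => hz.2.symm) .rfl

lemma div (ha : RationalAtInfinity a) (hb : RationalAtInfinity b)
    (hfreq : ∃ᶠ z in cobounded ℂ, b z ≠ 0) : RationalAtInfinity fun z => a z / b z := by
  simpa only [div_eq_mul_inv] using ha.mul (hb.inv hfreq)

end RationalAtInfinity

section LogDeriv

variable {𝕜 : Type*} [NontriviallyNormedField 𝕜]

lemma deriv_logDeriv_eq {f : 𝕜 → 𝕜} {z : 𝕜} (hf : DifferentiableAt 𝕜 f z)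
    (hf' : DifferentiableAt 𝕜 (deriv f) z) (h0 : f z ≠ 0) :
    deriv (logDeriv f) z = iteratedDeriv 2 f z / f z - logDeriv f z ^ 2 := by
  change deriv (fun w => deriv f w / f w) z = _
  rw [deriv_fun_div hf' hf h0, iteratedDeriv_succ, iteratedDeriv_one, logDeriv_apply]
  field_simp

lemma deriv_logDeriv_eq_of_linearODE {q : 𝕜 → 𝕜} {z ν₀ ν₁ : 𝕜} (hq : DifferentiableAt 𝕜 q z)
    (hq' : DifferentiableAt 𝕜 (deriv q) z) (h0 : q z ≠ 0)
    (hode : iteratedDeriv 2 q z + ν₁ * deriv q z + ν₀ * q z = 0) :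
    deriv (logDeriv q) z = -logDeriv q z ^ 2 - ν₁ * logDeriv q z - ν₀ := by
  rw [deriv_logDeriv_eq hq hq' h0, logDeriv_apply]
  field_simp
  linear_combination q z * hode

noncomputable def logDerivCoeff₁ (d₀ d₁ ν₁ : 𝕜 → 𝕜) (z : 𝕜) : 𝕜 :=
  2 * d₁ z + deriv d₀ z - ν₁ z * d₀ z

noncomputable def logDerivCoeff₀ (d₀ d₁ ν₀ ν₁ : 𝕜 → 𝕜) (z : 𝕜) : 𝕜 :=
  d₀ z * deriv d₁ z - ν₀ z * d₀ z ^ 2 - d₁ z ^ 2 - (deriv d₀ z - ν₁ z * d₀ z) * d₁ z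

theorem mul_iteratedDeriv_two_div_eq {d₀ d₁ ν₀ ν₁ p q : 𝕜 → 𝕜} {z : 𝕜}
    (hd₀ : DifferentiableAt 𝕜 d₀ z) (hd₁ : DifferentiableAt 𝕜 d₁ z)
    (hp : DifferentiableAt 𝕜 p z) (hp' : DifferentiableAt 𝕜 (deriv p) z) (hp0 : p z ≠ 0)
    (hq : DifferentiableAt 𝕜 q z) (hq' : DifferentiableAt 𝕜 (deriv q) z) (hq0 : q z ≠ 0)
    (hrel : logDeriv p =ᶠ[𝓝 z] fun w => d₀ w * logDeriv q w + d₁ w)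
    (hode : iteratedDeriv 2 q z + ν₁ z * deriv q z + ν₀ z * q z = 0) :
    d₀ z * (iteratedDeriv 2 p z / p z) = (d₀ z - 1) * logDeriv p z ^ 2
      + logDerivCoeff₁ d₀ d₁ ν₁ z * logDeriv p z + logDerivCoeff₀ d₀ d₁ ν₀ ν₁ z := by
  have hLq : DifferentiableAt 𝕜 (logDeriv q) z := hq'.div hq hq0
  have hLp' : deriv (logDeriv p) z
      = deriv d₀ z * logDeriv q z + d₀ z * deriv (logDeriv q) z + deriv d₁ z := by
    rw [hrel.deriv_eq, deriv_fun_add (f := fun w => d₀ w * logDeriv q w) (hd₀.mul hLq) hd₁,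
      deriv_fun_mul hd₀ hLq]
  rw [deriv_logDeriv_eq hp hp' hp0, deriv_logDeriv_eq_of_linearODE hq hq' hq0 hode,
    hrel.eq_of_nhds] at hLp'
  rw [hrel.eq_of_nhds, logDerivCoeff₁, logDerivCoeff₀]
  linear_combination d₀ z * hLp'

end LogDeriv

namespace RationalAtInfinity

variable {d₀ d₁ ν₀ ν₁ : ℂ → ℂ}

lemma logDerivCoeff₁ (hd₀ : RationalAtInfinity d₀) (hd₁ : RationalAtInfinity d₁)
    (hν₁ : RationalAtInfinity ν₁) : RationalAtInfinity (logDerivCoeff₁ d₀ d₁ ν₁) :=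
  (((const 2).mul hd₁).add hd₀.deriv).sub (hν₁.mul hd₀)

lemma logDerivCoeff₀ (hd₀ : RationalAtInfinity d₀) (hd₁ : RationalAtInfinity d₁)
    (hν₀ : RationalAtInfinity ν₀) (hν₁ : RationalAtInfinity ν₁) :
    RationalAtInfinity (logDerivCoeff₀ d₀ d₁ ν₀ ν₁) :=
  (((hd₀.mul hd₁.deriv).sub (hν₀.mul (hd₀.pow 2))).sub (hd₁.pow 2)).sub
    ((hd₀.deriv.sub (hν₁.mul hd₀)).mul hd₁)

end RationalAtInfinity

/-- second part of Lemma 3.3: if `p'/p = d₀ q'/q + d₁` and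
`q'' + ν₁ q' + ν₀ q = 0`, with all coefficients rational at infinity and
`d₀ ≢ 0, 1`, then for any `e₀, e₁` rational at infinity there are `E₀, E₁, E₂`
rational at infinity with `E₂ ≢ 0` such that
`E₂ p''/p + E₁ p'/p + E₀ = (p'/p)² + e₁ p'/p + e₀`. -/
theorem second_order_relation_for_logderiv_related_pair
    (d₀ d₁ ν₀ ν₁ e₀ e₁ : ℂ → ℂ)
    (hd₀ : RationalAtInfinity d₀) (hd₁ : RationalAtInfinity d₁)
    (hν₀ : RationalAtInfinity ν₀) (hν₁ : RationalAtInfinity ν₁)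
    (he₀ : RationalAtInfinity e₀) (he₁ : RationalAtInfinity e₁)
    (hd₀ne0 : ∀ r : ℝ, ∃ z : ℂ, r < ‖z‖ ∧ d₀ z ≠ 0)
    (hd₀ne1 : ∀ r : ℝ, ∃ z : ℂ, r < ‖z‖ ∧ d₀ z ≠ 1) :
    ∃ E₀ E₁ E₂ : ℂ → ℂ,
      RationalAtInfinity E₀ ∧ RationalAtInfinity E₁ ∧ RationalAtInfinity E₂ ∧
      (∀ r : ℝ, ∃ z : ℂ, r < ‖z‖ ∧ E₂ z ≠ 0) ∧
      ∀ (r : ℝ) (U : Set ℂ), 0 < r → IsOpen U → IsConnected U →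
        U ⊆ {z : ℂ | r < ‖z‖} →
        AnalyticOnNhd ℂ d₀ U → AnalyticOnNhd ℂ d₁ U →
        AnalyticOnNhd ℂ ν₀ U → AnalyticOnNhd ℂ ν₁ U →
        AnalyticOnNhd ℂ e₀ U → AnalyticOnNhd ℂ e₁ U →
        AnalyticOnNhd ℂ E₀ U → AnalyticOnNhd ℂ E₁ U → AnalyticOnNhd ℂ E₂ U →
        (∀ z ∈ U, d₀ z ≠ 0) → (∀ z ∈ U, d₀ z ≠ 1) →
        ∀ p q : ℂ → ℂ, AnalyticOnNhd ℂ p U → AnalyticOnNhd ℂ q U →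
        (∀ z ∈ U, p z ≠ 0) → (∀ z ∈ U, q z ≠ 0) →
        (∀ z ∈ U, deriv p z / p z = d₀ z * (deriv q z / q z) + d₁ z) →
        (∀ z ∈ U, iteratedDeriv 2 q z + ν₁ z * deriv q z + ν₀ z * q z = 0) →
        ∀ z ∈ U,
          E₂ z * (iteratedDeriv 2 p z / p z) + E₁ z * (deriv p z / p z) + E₀ z
            = (deriv p z / p z) ^ 2 + e₁ z * (deriv p z / p z) + e₀ z := by
  have hfreq₀ : ∃ᶠ z in cobounded ℂ, d₀ z ≠ 0 := frequently_cobounded_iff_norm_lt.2 hd₀ne0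
  have hfreq₁ : ∃ᶠ z in cobounded ℂ, d₀ z - 1 ≠ 0 :=
    frequently_cobounded_iff_norm_lt.2 fun r =>
      (hd₀ne1 r).imp fun _ h => ⟨h.1, sub_ne_zero.2 h.2⟩
  have hd₀' : RationalAtInfinity fun z => d₀ z - 1 := hd₀.sub (.const 1)
  refine ⟨fun z => e₀ z - logDerivCoeff₀ d₀ d₁ ν₀ ν₁ z / (d₀ z - 1),
    fun z => e₁ z - logDerivCoeff₁ d₀ d₁ ν₁ z / (d₀ z - 1), fun z => d₀ z / (d₀ z - 1),
    he₀.sub ((RationalAtInfinity.logDerivCoeff₀ hd₀ hd₁ hν₀ hν₁).div hd₀' hfreq₁),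
    he₁.sub ((RationalAtInfinity.logDerivCoeff₁ hd₀ hd₁ hν₁).div hd₀' hfreq₁),
    hd₀.div hd₀' hfreq₁, ?_, ?_⟩
  · exact frequently_cobounded_iff_norm_lt.1 (((hd₀.eventually_ne_zero hfreq₀).and
      (hd₀'.eventually_ne_zero hfreq₁)).mono fun z h => div_ne_zero h.1 h.2).frequently
  · intro r U _ hU _ _ hUd₀ hUd₁ _ _ _ _ _ _ _ _ hU1 p q hp hq hp0 hq0 hrel hode z hz
    have key := mul_iteratedDeriv_two_div_eq (hUd₀ z hz).differentiableAt
      (hUd₁ z hz).differentiableAt (hp z hz).differentiableAt (hp.deriv z hz).differentiableAt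
      (hp0 z hz) (hq z hz).differentiableAt (hq.deriv z hz).differentiableAt (hq0 z hz)
      (eventually_of_mem (hU.mem_nhds hz) hrel) (hode z hz)
    rw [logDeriv_apply] at key
    generalize deriv p z / p z = L at key ⊢
    generalize iteratedDeriv 2 p z / p z = X at key ⊢
    have := sub_ne_zero.2 (hU1 z hz)
    field_simp
    linear_combination key
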